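/- The 4-dimensional algebra A = ℂ⟨s₀, s₁, γ₀, γ₁⟩ with the Taft algebra relations, deformed by setting γ_iγ_{i+1} = t s_{i+1} for a nonzero scalar t, is isomorphic to the algebra of 2×2 complex matrices; in particular it is not isomorphic to A (which is not semisimple). -/

import Mathlib

/-! Sending `s₀, s₁, γ₀, γ₁` to the matrices `E₀₀, E₁₁, E₁₀, t E₀₁` respects the relations
of `A_t`. Every product of two generators of `A_t` is, by a defining relation, zero or a
multiple of a generator, and `s₀ + s₁ = 1`, so the four generators span `A_t`; for `t ≠ 0`
their images form a basis of `M₂(ℂ)`, hence the representation is bijective. On the other hand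
`A₀` has a character (`s₀ ↦ 1`, the other generators `↦ 0`, which is compatible with
`γ₀γ₁ = t s₁` only for `t = 0`), while `M₂(ℂ)` admits no ring homomorphism to a nonzero
commutative ring, since `E_ij = E_ii E_ij` and `E_ij E_ii = 0` force every off-diagonal matrix
unit to map to `0`. -/

open FreeAlgebra

/-- The relations of the deformed Taft algebra `A_t` on generators
`0 ↦ s₀, 1 ↦ s₁, 2 ↦ γ₀, 3 ↦ γ₁` (indices mod 2), with `γᵢγᵢ₊₁ = t sᵢ₊₁`. -/
inductive TaftRel (t : ℂ) : FreeAlgebra ℂ (Fin 4) → FreeAlgebra ℂ (Fin 4) → Prop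
  | sum : TaftRel t (ι ℂ (0 : Fin 4) + ι ℂ (1 : Fin 4)) 1
  | idem0 : TaftRel t (ι ℂ (0 : Fin 4) * ι ℂ (0 : Fin 4)) (ι ℂ (0 : Fin 4))
  | idem1 : TaftRel t (ι ℂ (1 : Fin 4) * ι ℂ (1 : Fin 4)) (ι ℂ (1 : Fin 4))
  | orth0 : TaftRel t (ι ℂ (0 : Fin 4) * ι ℂ (1 : Fin 4)) 0
  | orth1 : TaftRel t (ι ℂ (1 : Fin 4) * ι ℂ (0 : Fin 4)) 0
  | nil0 : TaftRel t (ι ℂ (2 : Fin 4) * ι ℂ (2 : Fin 4)) 0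
  | nil1 : TaftRel t (ι ℂ (3 : Fin 4) * ι ℂ (3 : Fin 4)) 0
  | gg0 : TaftRel t (ι ℂ (2 : Fin 4) * ι ℂ (3 : Fin 4)) (t • ι ℂ (1 : Fin 4))
  | gg1 : TaftRel t (ι ℂ (3 : Fin 4) * ι ℂ (2 : Fin 4)) (t • ι ℂ (0 : Fin 4))
  | sg00 : TaftRel t (ι ℂ (0 : Fin 4) * ι ℂ (2 : Fin 4)) 0
  | sg11 : TaftRel t (ι ℂ (1 : Fin 4) * ι ℂ (3 : Fin 4)) 0
  | sg10 : TaftRel t (ι ℂ (1 : Fin 4) * ι ℂ (2 : Fin 4)) (ι ℂ (2 : Fin 4))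
  | sg01 : TaftRel t (ι ℂ (0 : Fin 4) * ι ℂ (3 : Fin 4)) (ι ℂ (3 : Fin 4))
  | gs00 : TaftRel t (ι ℂ (2 : Fin 4) * ι ℂ (0 : Fin 4)) (ι ℂ (2 : Fin 4))
  | gs11 : TaftRel t (ι ℂ (3 : Fin 4) * ι ℂ (1 : Fin 4)) (ι ℂ (3 : Fin 4))
  | gs01 : TaftRel t (ι ℂ (2 : Fin 4) * ι ℂ (1 : Fin 4)) 0
  | gs10 : TaftRel t (ι ℂ (3 : Fin 4) * ι ℂ (0 : Fin 4)) 0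

/-- The deformed Taft algebra `A_t`; `A_0` is the undeformed algebra `A`. -/
abbrev TaftAlg (t : ℂ) := RingQuot (TaftRel t)

open Matrix in
theorem Matrix.isEmpty_ringHom {n R S : Type*} [Fintype n] [DecidableEq n] [Nontrivial n]
    [Semiring R] [CommSemiring S] [Nontrivial S] : IsEmpty (Matrix n n R →+* S) := by
  refine ⟨fun f => ?_⟩
  have single_mul_single_one (i j k : n) :
      single i j (1 : R) * single j k 1 = single i k 1 := by
    rw [single_mul_single_same, one_mul]
  have off_diag (i j : n) (hij : i ≠ j) : f (single i j 1) = 0 := by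
    calc f (single i j 1) = f (single i i 1) * f (single i j 1) := by
          rw [← map_mul, single_mul_single_one]
      _ = f (single i j 1 * single i i 1) := by rw [map_mul, mul_comm]
      _ = 0 := by rw [single_mul_single_of_ne (h := hij.symm), map_zero]
  have diag (i : n) : f (single i i 1) = 0 := by
    obtain ⟨j, hji⟩ := exists_ne i
    rw [← single_mul_single_one i j i, map_mul, off_diag i j hji.symm, zero_mul]
  refine one_ne_zero (α := S) ?_
  rw [← map_one f, ← sum_single_one, map_sum]
  exact Finset.sum_eq_zero fun i _ => diag i

namespace TaftAlg

open Submodule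

variable (t : ℂ)

def gen (i : Fin 4) : TaftAlg t := RingQuot.mkAlgHom ℂ (TaftRel t) (ι ℂ i)

lemma exists_taftRel_ι_mul_ι (i j : Fin 4) :
    ∃ r, TaftRel t (ι ℂ i * ι ℂ j) r ∧ r ∈ span ℂ (Set.range (ι ℂ)) := by
  -- `constructor` picks the defining relation whose left-hand side is `ι i * ι j`.
  fin_cases i <;> fin_cases j <;>
    exact ⟨_, by constructor, by
      first
      | exact zero_mem _
      | exact subset_span ⟨_, rfl⟩
      | exact smul_mem _ _ (subset_span ⟨_, rfl⟩)⟩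

lemma gen_zero_add_gen_one : gen t 0 + gen t 1 = 1 := by
  rw [gen, gen, ← map_add, RingQuot.mkAlgHom_rel ℂ TaftRel.sum, map_one]

lemma range_gen : Set.range (gen t) = RingQuot.mkAlgHom ℂ (TaftRel t) '' Set.range (ι ℂ) := by
  rw [← Set.range_comp]; rfl

lemma gen_mul_gen_mem_span (i j : Fin 4) : gen t i * gen t j ∈ span ℂ (Set.range (gen t)) := by
  obtain ⟨r, hr, hr_span⟩ := exists_taftRel_ι_mul_ι t i j
  rw [gen, gen, ← map_mul, RingQuot.mkAlgHom_rel ℂ hr, range_gen]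
  rw [← AlgHom.coe_toLinearMap, span_image]
  exact mem_map_of_mem hr_span

lemma span_range_gen : span ℂ (Set.range (gen t)) = ⊤ := by
  set p := span ℂ (Set.range (gen t))
  have one_mem : (1 : TaftAlg t) ∈ p := by
    rw [← gen_zero_add_gen_one]
    exact add_mem (subset_span ⟨0, rfl⟩) (subset_span ⟨1, rfl⟩)
  have mul_mem' (x y : TaftAlg t) (hx : x ∈ p) (hy : y ∈ p) : x * y ∈ p := by
    have hxy := mul_mem_mul hx hy
    rw [span_mul_span] at hxy
    refine span_le.mpr ?_ hxy
    rintro _ ⟨_, ⟨i, rfl⟩, _, ⟨j, rfl⟩, rfl⟩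
    exact gen_mul_gen_mem_span t i j
  have adjoin_eq_top : Algebra.adjoin ℂ (Set.range (gen t)) = ⊤ := by
    rw [range_gen, Algebra.adjoin_image, FreeAlgebra.adjoin_range_ι, Algebra.map_top,
      AlgHom.range_eq_top]
    exact RingQuot.mkAlgHom_surjective ℂ (TaftRel t)
  rw [eq_top_iff]
  intro x _
  have hx : x ∈ Algebra.adjoin ℂ (Set.range (gen t)) := adjoin_eq_top ▸ Algebra.mem_top
  exact Algebra.adjoin_le (S := p.toSubalgebra one_mem mul_mem') subset_span hx

def repGen : Fin 4 → Matrix (Fin 2) (Fin 2) ℂ :=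
  ![!![1, 0; 0, 0], !![0, 0; 0, 1], !![0, 0; 1, 0], !![0, t; 0, 0]]

def rep : TaftAlg t →ₐ[ℂ] Matrix (Fin 2) (Fin 2) ℂ :=
  RingQuot.liftAlgHom ℂ ⟨lift ℂ (repGen t), fun x y h => by
    induction h <;>
      simp [repGen, Matrix.one_fin_two, ← Matrix.ext_iff, Fin.forall_fin_two, funext_iff]⟩

lemma rep_gen (i : Fin 4) : rep t (gen t i) = repGen t i := by
  simp [rep, gen, RingQuot.liftAlgHom_mkAlgHom_apply]

lemma rep_sum_smul_gen (c : Fin 4 → ℂ) :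
    rep t (∑ i, c i • gen t i) = !![c 0, t * c 3; c 2, c 1] := by
  simp [rep_gen, Fin.sum_univ_four, repGen, mul_comm]

variable {t}

lemma rep_bijective (ht : t ≠ 0) : Function.Bijective (rep t) := by
  constructor
  · rw [injective_iff_map_eq_zero]
    intro x hx
    have hx_span : x ∈ span ℂ (Set.range (gen t)) := span_range_gen t ▸ mem_top
    obtain ⟨c, rfl⟩ := (mem_span_range_iff_exists_fun ℂ).mp hx_span
    rw [rep_sum_smul_gen] at hx
    obtain ⟨⟨h0, h3⟩, h2, h1⟩ : (c 0 = 0 ∧ c 3 = 0) ∧ c 2 = 0 ∧ c 1 = 0 := by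
      simpa [← Matrix.ext_iff, Fin.forall_fin_two, ht] using hx
    simp [Fin.sum_univ_four, h0, h1, h2, h3]
  · intro M
    refine ⟨∑ i, ![M 0 0, M 1 1, M 1 0, M 0 1 / t] i • gen t i, ?_⟩
    rw [rep_sum_smul_gen]
    ext i j
    fin_cases i <;> fin_cases j <;> simp [mul_div_cancel₀ _ ht]

def undeformedCharacter : TaftAlg 0 →ₐ[ℂ] ℂ :=
  RingQuot.liftAlgHom ℂ ⟨lift ℂ ![1, 0, 0, 0], fun x y h => by induction h <;> simp⟩

end TaftAlg

/-- For `t ≠ 0`, the deformation `A_t` of the Taft algebra is isomorphic to the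
algebra of 2×2 complex matrices; in particular it is not isomorphic to the
undeformed algebra `A = A_0`. -/
theorem taft_deformation_matrix_iso (t : ℂ) (ht : t ≠ 0) :
    Nonempty (TaftAlg t ≃ₐ[ℂ] Matrix (Fin 2) (Fin 2) ℂ) ∧
      IsEmpty (TaftAlg t ≃ₐ[ℂ] TaftAlg 0) := by
  let e := AlgEquiv.ofBijective (TaftAlg.rep t) (TaftAlg.rep_bijective ht)
  refine ⟨⟨e⟩, ⟨fun f => ?_⟩⟩
  exact Matrix.isEmpty_ringHom.elim
    (TaftAlg.undeformedCharacter.comp (f.toAlgHom.comp e.symm.toAlgHom)).toRingHom
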